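/- Suppose the No Direct Effect assumption holds (q(x,a,e) = q̄(x,e) for all a) but common embedding support may fail. Then, with the convention c/0 = 0 in the definition of w(x,e), the bias of MIPS equals E₀[w(x,e)·q̄(x,e)] − V(π) = − ∑_{x∈X} p(x) ∑_{e ∈ U₀ᵉ(x)} p(e|x,π) · q̄(x,e), where U₀ᵉ(x) := { e ∈ E : p(e|x,π₀) = 0 } is the set of embeddings unsupported by the logging policy at x. -/

import Mathlib

/-!
Under No Direct Effect the reward depends on the action only through the embedding, so summing
out the action turns both the MIPS estimand and `V(π)` into sums against the marginal embedding
distributions `p(e|x,π₀)` and `p(e|x,π)`. The weight `w(x,e)` cancels `p(e|x,π₀)` exactly where the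
latter is nonzero; where it vanishes, the `c/0 = 0` convention kills the MIPS term and only
`-p(e|x,π) q̄(x,e)` survives.
-/

open Finset

/-- Marginal embedding distribution `p(e|x,π')` of a policy `π'`. -/
noncomputable def pE {X A E : Type*} [Fintype A]
    (π' : X → A → ℝ) (φ : X → A → E → ℝ) (x : X) (e : E) : ℝ :=
  ∑ a, π' x a * φ x a e

/-- Marginal importance weight `w(x,e) = p(e|x,π)/p(e|x,π₀)` (with `c/0 = 0`). -/
noncomputable def wE {X A E : Type*} [Fintype A]
    (πt π₀ : X → A → ℝ) (φ : X → A → E → ℝ) (x : X) (e : E) : ℝ :=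
  pE πt φ x e / pE π₀ φ x e

/-- Expectation under the logging process. -/
noncomputable def E₀ {X A E : Type*} [Fintype X] [Fintype A] [Fintype E]
    (p : X → ℝ) (π₀ : X → A → ℝ) (φ : X → A → E → ℝ) (f : X → A → E → ℝ) : ℝ :=
  ∑ x, ∑ a, ∑ e, p x * π₀ x a * φ x a e * f x a e

/-- Policy value `V(π)`. -/
noncomputable def Vval {X A E : Type*} [Fintype X] [Fintype A] [Fintype E]
    (p : X → ℝ) (πt : X → A → ℝ) (φ : X → A → E → ℝ) (q : X → A → E → ℝ) : ℝ :=
  ∑ x, ∑ a, ∑ e, p x * πt x a * φ x a e * q x a e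

section MarginalEmbedding

variable {X A E : Type*} [Fintype X] [Fintype A] [Fintype E]
  (p : X → ℝ) (π : X → A → ℝ) (φ : X → A → E → ℝ) (f : X → E → ℝ)

theorem Vval_eq_sum_pE :
    Vval p π φ (fun x _ e => f x e) = ∑ x, p x * ∑ e, pE π φ x e * f x e := by
  unfold Vval pE
  refine sum_congr rfl fun x _ => ?_
  rw [sum_comm, mul_sum]
  refine sum_congr rfl fun e _ => ?_
  rw [sum_mul, mul_sum]
  exact sum_congr rfl fun a _ => by ring

theorem E₀_eq_sum_pE :
    E₀ p π φ (fun x _ e => f x e) = ∑ x, p x * ∑ e, pE π φ x e * f x e :=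
  Vval_eq_sum_pE p π φ f

end MarginalEmbedding

theorem Finset.sum_mul_div_mul_sub_sum_mul {ι : Type*} (s : Finset ι) (a b c : ι → ℝ) :
    ∑ i ∈ s, b i * (a i / b i * c i) - ∑ i ∈ s, a i * c i
      = -∑ i ∈ s with b i = 0, a i * c i := by
  rw [← sum_sub_distrib, sum_filter, ← sum_neg_distrib]
  refine sum_congr rfl fun i _ => ?_
  by_cases hb : b i = 0
  · simp [hb]
  · rw [if_neg hb, ← mul_assoc, mul_div_cancel₀ _ hb, sub_self, neg_zero]

theorem mips_bias_deficient_embedding_support_general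
    {X A E : Type*} [Fintype X] [Fintype A] [Fintype E]
    (p : X → ℝ) (πt π₀ : X → A → ℝ) (φ : X → A → E → ℝ)
    (q : X → A → E → ℝ) (qbar : X → E → ℝ)
    (hnde : ∀ x a e, q x a e = qbar x e) :
    E₀ p π₀ φ (fun x _ e => wE πt π₀ φ x e * qbar x e) - Vval p πt φ q =
      - ∑ x, p x * ∑ e ∈ Finset.univ.filter (fun e => pE π₀ φ x e = 0),
          pE πt φ x e * qbar x e := by
  obtain rfl : q = fun x _ e => qbar x e := funext fun x => funext fun a => funext (hnde x a)
  rw [E₀_eq_sum_pE, Vval_eq_sum_pE, ← sum_sub_distrib, ← sum_neg_distrib]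
  refine sum_congr rfl fun x _ => ?_
  rw [← mul_sub, ← mul_neg]
  exact congrArg (p x * ·) (sum_mul_div_mul_sub_sum_mul _ _ _ _)

/-- Bias of MIPS under deficient embedding support: under No Direct Effect
(but possibly without common embedding support), the bias of MIPS equals minus
the value of the target policy on the unsupported embeddings
`U₀ᵉ(x) = {e : p(e|x,π₀) = 0}`. -/
theorem mips_bias_deficient_embedding_support
    {X A E : Type*} [Fintype X] [Fintype A] [Fintype E]
    (p : X → ℝ) (πt π₀ : X → A → ℝ) (φ : X → A → E → ℝ)
    (q : X → A → E → ℝ) (qbar : X → E → ℝ)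
    (hp : ∀ x, 0 ≤ p x) (hp1 : ∑ x, p x = 1)
    (hπt : ∀ x a, 0 ≤ πt x a) (hπt1 : ∀ x, ∑ a, πt x a = 1)
    (hπ₀ : ∀ x a, 0 ≤ π₀ x a) (hπ₀1 : ∀ x, ∑ a, π₀ x a = 1)
    (hφ : ∀ x a e, 0 ≤ φ x a e) (hφ1 : ∀ x a, ∑ e, φ x a e = 1)
    (hnde : ∀ x a e, q x a e = qbar x e) :
    E₀ p π₀ φ (fun x _ e => wE πt π₀ φ x e * qbar x e) - Vval p πt φ q =
      - ∑ x, p x * ∑ e ∈ Finset.univ.filter (fun e => pE π₀ φ x e = 0),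
          pE πt φ x e * qbar x e :=
  mips_bias_deficient_embedding_support_general p πt π₀ φ q qbar hnde
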